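/- arXiv:2602.23376 — 2 statements merged into one kernel-verified Lean document; each statement's English description precedes it below -/
import Mathlib

section
/- Let E be a real inner product space, T a positive natural number, and for each t ∈ {1, …, T} let ℓ_t : E → ℝ be differentiable and convex in the gradient-inequality sense: ℓ_t(θ') ≥ ℓ_t(θ) + ⟪∇ℓ_t(θ), θ' − θ⟫ for all θ, θ'. Let G > 0 bound all gradient norms, ‖∇ℓ_t(θ)‖ ≤ G, let θ* ∈ E, and let D > 0 with ‖θ_1 − θ*‖ ≤ D. Define the online gradient descent iterates θ_{t+1} = θ_t − η·∇ℓ_t(θ_t) with constant step size η = D/(G√T). Then the regret satisfies ∑_{t=1}^T (ℓ_t(θ_t) − ℓ_t(θ*)) ≤ D·G·√T. -/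
open scoped RealInnerProductSpace

lemma telescope_aux (f : ℕ → ℝ) (n : ℕ) :
    ∑ t ∈ Finset.Icc 1 n, (f t - f (t + 1)) = f 1 - f (n + 1) := by
  induction n with
  | zero => simp
  | succ n ih =>
    rw [Finset.sum_Icc_succ_top (by omega), ih]
    ring

/-- Online gradient descent with constant step size `η = D/(G√T)` on
differentiable convex losses `ℓ_t` (t = 1, …, T) with gradients bounded by `G`, starting
within distance `D` of the comparator `θ*`, has regret at most `D·G·√T`. -/
theorem online_gradient_descent_regret
    {E : Type*} [NormedAddCommGroup E] [InnerProductSpace ℝ E] [CompleteSpace E]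
    (T : ℕ) (hT : 0 < T) (ℓ : ℕ → E → ℝ)
    (hdiff : ∀ t, 1 ≤ t → t ≤ T → Differentiable ℝ (ℓ t))
    (hconv : ∀ t, 1 ≤ t → t ≤ T → ∀ θ θ' : E,
      ℓ t θ' ≥ ℓ t θ + ⟪gradient (ℓ t) θ, θ' - θ⟫)
    (G : ℝ) (hG : 0 < G)
    (hgrad : ∀ t, 1 ≤ t → t ≤ T → ∀ θ : E, ‖gradient (ℓ t) θ‖ ≤ G)
    (θstar : E) (D : ℝ) (hD : 0 < D)
    (θ : ℕ → E) (hinit : ‖θ 1 - θstar‖ ≤ D)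
    (hupd : ∀ t, 1 ≤ t → t ≤ T →
      θ (t + 1) = θ t - (D / (G * Real.sqrt T)) • gradient (ℓ t) (θ t)) :
    ∑ t ∈ Finset.Icc 1 T, (ℓ t (θ t) - ℓ t θstar) ≤ D * G * Real.sqrt T := by
  set η : ℝ := D / (G * Real.sqrt T) with hη
  have hsT : (0:ℝ) < Real.sqrt T := Real.sqrt_pos.2 (by exact_mod_cast hT)
  have hηpos : 0 < η := div_pos hD (mul_pos hG hsT)
  set a : ℕ → ℝ := fun t => ‖θ t - θstar‖ ^ 2 with ha
  have key : ∀ t ∈ Finset.Icc 1 T,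
      ℓ t (θ t) - ℓ t θstar ≤ (a t - a (t + 1)) / (2 * η) + η * G ^ 2 / 2 := by
    intro t ht
    rw [Finset.mem_Icc] at ht
    obtain ⟨ht1, ht2⟩ := ht
    set g := gradient (ℓ t) (θ t) with hg
    have hstep : θ (t + 1) = θ t - η • g := hupd t ht1 ht2
    have hx : θ (t + 1) - θstar = (θ t - θstar) - η • g := by rw [hstep]; abel
    have hnorm : a (t + 1) = a t - 2 * (η * ⟪g, θ t - θstar⟫) + η ^ 2 * ‖g‖ ^ 2 := by
      show ‖θ (t+1) - θstar‖ ^ 2 = _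
      rw [hx, norm_sub_sq_real, real_inner_smul_right, norm_smul,
        real_inner_comm, mul_pow]
      simp [abs_of_pos hηpos, ha]
    have hip : ⟪g, θ t - θstar⟫ ≤ (a t - a (t + 1)) / (2 * η) + η * ‖g‖ ^ 2 / 2 := by
      have heq : (a t - a (t + 1)) / (2 * η) + η * ‖g‖ ^ 2 / 2 = ⟪g, θ t - θstar⟫ := by
        rw [hnorm]; field_simp; ring
      rw [heq]
    have hconv' := hconv t ht1 ht2 (θ t) θstar
    have hgb := hgrad t ht1 ht2 (θ t)
    have hg2 : ‖g‖ ^ 2 ≤ G ^ 2 := by nlinarith [norm_nonneg g]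
    have : ℓ t (θ t) - ℓ t θstar ≤ ⟪g, θ t - θstar⟫ := by
      have : ⟪g, θstar - θ t⟫ = -⟪g, θ t - θstar⟫ := by
        rw [← inner_neg_right]; congr 1; abel
      linarith [hconv', this.symm.le, this.le]
    nlinarith [hηpos]
  have hsum := Finset.sum_le_sum key
  rw [Finset.sum_add_distrib, ← Finset.sum_div, telescope_aux a T,
    Finset.sum_const, Nat.card_Icc] at hsum
  have haT : 0 ≤ a (T + 1) := by positivity
  have ha1 : a 1 ≤ D ^ 2 := by
    show ‖θ 1 - θstar‖ ^ 2 ≤ D ^ 2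
    nlinarith [norm_nonneg (θ 1 - θstar), hinit]
  have hTs : Real.sqrt T * Real.sqrt T = (T : ℝ) := Real.mul_self_sqrt (by positivity)
  have hfinal : (a 1 - a (T + 1)) / (2 * η) + ((T + 1 - 1) : ℕ) • (η * G ^ 2 / 2)
      ≤ D * G * Real.sqrt T := by
    simp only [Nat.add_sub_cancel, nsmul_eq_mul]
    have h1 : (a 1 - a (T + 1)) / (2 * η) ≤ D ^ 2 / (2 * η) := by
      apply div_le_div_of_nonneg_right (by linarith) (by positivity) |>.trans_eq rfl
    have h2 : D ^ 2 / (2 * η) = D * G * Real.sqrt T / 2 := by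
      rw [hη]; field_simp
    have h3 : (T : ℝ) * (η * G ^ 2 / 2) = D * G * Real.sqrt T / 2 := by
      rw [hη]; field_simp; linear_combination (-1 : ℝ) * hTs
    linarith
  linarith
end

section
/- Let E be a real inner product space, T a positive natural number, and for each t ∈ {1, …, T} let ℓ_t : E → ℝ be differentiable and convex in the gradient-inequality sense: ℓ_t(θ') ≥ ℓ_t(θ) + ⟪∇ℓ_t(θ), θ' − θ⟫ for all θ, θ'. Let G > 0 with ‖∇ℓ_t(θ)‖ ≤ G for all t and θ, let θ* ∈ E, and let D > 0 with ‖θ_t − θ*‖ ≤ D for all t ∈ {1, …, T}. Define the online gradient descent iterates with decreasing step sizes θ_{t+1} = θ_t − η_t·∇ℓ_t(θ_t), where η_t = D/(G·√t). Then ∑_{t=1}^T (ℓ_t(θ_t) − ℓ_t(θ*)) ≤ (3/2)·D·G·√T. -/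
open scoped RealInnerProductSpace

lemma sum_one_div_sqrt_le (T : ℕ) :
    ∑ t ∈ Finset.Icc 1 T, 1 / Real.sqrt t ≤ 2 * Real.sqrt T := by
  induction T with
  | zero => simp
  | succ n ih =>
    rw [Finset.sum_Icc_succ_top (by omega)]
    have hs : Real.sqrt n ^ 2 = n := Real.sq_sqrt (by positivity)
    have hu : Real.sqrt (n+1) ^ 2 = (n+1 : ℝ) := by
      rw [Real.sq_sqrt (by positivity)]
    have hs0 : (0:ℝ) ≤ Real.sqrt n := Real.sqrt_nonneg _
    have hu0 : (0:ℝ) < Real.sqrt (n+1) := Real.sqrt_pos.2 (by positivity)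
    have key : 1 / Real.sqrt (n+1) ≤ 2 * Real.sqrt (n+1) - 2 * Real.sqrt n := by
      rw [div_le_iff₀ hu0]
      nlinarith [sq_nonneg (Real.sqrt (n+1) - Real.sqrt n)]
    push_cast
    linarith

lemma telescope_sum_le (a b : ℕ → ℝ) (D2 : ℝ) (T : ℕ)
    (haD : ∀ t, 1 ≤ t → t ≤ T → a t ≤ D2)
    (hb : ∀ t, 0 ≤ b t) (hbm : Monotone b) :
    ∀ n, 1 ≤ n → n ≤ T →
      ∑ t ∈ Finset.Icc 1 n, b t * (a t - a (t+1)) ≤ b n * (D2 - a (n+1)) := by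
  intro n hn
  induction n, hn using Nat.le_induction with
  | base =>
    intro h1T
    simp only [Finset.Icc_self, Finset.sum_singleton]
    have := haD 1 le_rfl h1T
    nlinarith [hb 1]
  | succ n hn ih =>
    intro hnT
    rw [Finset.sum_Icc_succ_top (by omega)]
    have h1 := ih (by omega)
    have h2 := haD (n+1) (by omega) hnT
    have h3 : b n ≤ b (n+1) := hbm (by omega)
    nlinarith [hb n, hb (n+1)]

/-- Online gradient descent with decreasing step sizes `η_t = D/(G√t)` on
differentiable convex losses `ℓ_t` (t = 1, …, T) with gradients bounded by `G`, whose
iterates stay within distance `D` of the comparator `θ*`, has regret at most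
`(3/2)·D·G·√T`. -/
theorem online_gradient_descent_regret_decreasing_step
    {E : Type*} [NormedAddCommGroup E] [InnerProductSpace ℝ E] [CompleteSpace E]
    (T : ℕ) (hT : 0 < T) (ℓ : ℕ → E → ℝ)
    (hdiff : ∀ t, 1 ≤ t → t ≤ T → Differentiable ℝ (ℓ t))
    (hconv : ∀ t, 1 ≤ t → t ≤ T → ∀ θ θ' : E,
      ℓ t θ' ≥ ℓ t θ + ⟪gradient (ℓ t) θ, θ' - θ⟫)
    (G : ℝ) (hG : 0 < G)
    (hgrad : ∀ t, 1 ≤ t → t ≤ T → ∀ θ : E, ‖gradient (ℓ t) θ‖ ≤ G)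
    (θstar : E) (D : ℝ) (hD : 0 < D)
    (θ : ℕ → E) (hdist : ∀ t, 1 ≤ t → t ≤ T → ‖θ t - θstar‖ ≤ D)
    (hupd : ∀ t, 1 ≤ t → t ≤ T →
      θ (t + 1) = θ t - (D / (G * Real.sqrt t)) • gradient (ℓ t) (θ t)) :
    ∑ t ∈ Finset.Icc 1 T, (ℓ t (θ t) - ℓ t θstar) ≤ (3 / 2) * D * G * Real.sqrt T := by
  set a : ℕ → ℝ := fun t => ‖θ t - θstar‖ ^ 2 with ha
  set b : ℕ → ℝ := fun t => G * Real.sqrt t / (2 * D) with hb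
  -- per-step bound
  have key : ∀ t, 1 ≤ t → t ≤ T →
      ℓ t (θ t) - ℓ t θstar ≤ b t * (a t - a (t+1)) + (D * G / 2) * (1 / Real.sqrt t) := by
    intro t ht htT
    set η : ℝ := D / (G * Real.sqrt t) with hηdef
    set g : E := gradient (ℓ t) (θ t) with hgdef
    have hst : (0:ℝ) < Real.sqrt t := Real.sqrt_pos.2 (by positivity)
    have hη : 0 < η := by positivity
    -- convexity step
    have h1 : ℓ t (θ t) - ℓ t θstar ≤ ⟪θ t - θstar, g⟫ := by
      have := hconv t ht htT (θ t) θstar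
      have h2 : ⟪g, θstar - θ t⟫ = -⟪θ t - θstar, g⟫ := by
        rw [real_inner_comm, ← inner_neg_left, neg_sub]
      linarith [this, h2 ▸ this]
    -- expansion of the update
    have hsq : a (t+1) = a t - 2 * η * ⟪θ t - θstar, g⟫ + η^2 * ‖g‖^2 := by
      have hstep : θ (t+1) - θstar = (θ t - θstar) - η • g := by
        rw [hupd t ht htT]; abel
      simp only [ha]
      rw [hstep, norm_sub_sq_real, real_inner_smul_right, norm_smul,
        Real.norm_eq_abs, abs_of_pos hη, mul_pow]
      ring
    have hip : ⟪θ t - θstar, g⟫ = (a t - a (t+1)) / (2 * η) + (η / 2) * ‖g‖^2 := by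
      rw [hsq]; field_simp; ring
    have hgb : ‖g‖^2 ≤ G^2 := by
      have := hgrad t ht htT (θ t)
      nlinarith [norm_nonneg g]
    have hbeq : (a t - a (t+1)) / (2 * η) = b t * (a t - a (t+1)) := by
      rw [hηdef, hb]
      field_simp
    have hηeq : (η / 2) * G^2 ≤ (D * G / 2) * (1 / Real.sqrt t) :=
      le_of_eq (by rw [hηdef]; field_simp)
    calc ℓ t (θ t) - ℓ t θstar ≤ ⟪θ t - θstar, g⟫ := h1
      _ = (a t - a (t+1)) / (2 * η) + (η / 2) * ‖g‖^2 := hip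
      _ ≤ b t * (a t - a (t+1)) + (D * G / 2) * (1 / Real.sqrt t) := by
          rw [hbeq]
          have : (η / 2) * ‖g‖^2 ≤ (η / 2) * G^2 := by nlinarith
          linarith
  -- sum it up
  have hsum1 : ∑ t ∈ Finset.Icc 1 T, b t * (a t - a (t+1)) ≤ b T * D^2 := by
    have htel := telescope_sum_le a b (D^2) T
      (fun t ht htT => by
        simp only [ha]
        have := hdist t ht htT
        nlinarith [norm_nonneg (θ t - θstar)])
      (fun t => by simp only [hb]; positivity)
      (fun i j hij => by
        simp only [hb]
        gcongr)
      T hT le_rfl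
    have h0 : 0 ≤ a (T+1) := by simp only [ha]; positivity
    have hbT : 0 ≤ b T := by simp only [hb]; positivity
    nlinarith
  have hsum2 : ∑ t ∈ Finset.Icc 1 T, (D * G / 2) * (1 / Real.sqrt t) ≤ D * G * Real.sqrt T := by
    rw [← Finset.mul_sum]
    have h := sum_one_div_sqrt_le T
    have : D * G / 2 * (∑ t ∈ Finset.Icc 1 T, 1 / Real.sqrt t) ≤ D * G / 2 * (2 * Real.sqrt T) :=
      mul_le_mul_of_nonneg_left h (by positivity)
    linarith
  have hbT : b T * D^2 = D * G * Real.sqrt T / 2 := by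
    simp only [hb]; field_simp
  calc ∑ t ∈ Finset.Icc 1 T, (ℓ t (θ t) - ℓ t θstar)
      ≤ ∑ t ∈ Finset.Icc 1 T, (b t * (a t - a (t+1)) + (D * G / 2) * (1 / Real.sqrt t)) := by
        apply Finset.sum_le_sum
        intro t ht
        rw [Finset.mem_Icc] at ht
        exact key t ht.1 ht.2
    _ = (∑ t ∈ Finset.Icc 1 T, b t * (a t - a (t+1)))
        + ∑ t ∈ Finset.Icc 1 T, (D * G / 2) * (1 / Real.sqrt t) := Finset.sum_add_distrib
    _ ≤ b T * D^2 + D * G * Real.sqrt T := add_le_add hsum1 hsum2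
    _ = (3 / 2) * D * G * Real.sqrt T := by rw [hbT]; ring
end
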